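/- arXiv:1201.6054 — 4 statements merged into one kernel-verified Lean document; each statement's English description precedes it below -/
import Mathlib

section
/- Let u : A₁ × A₂ → ℝ^m be a payoff function on finite action sets, extended bilinearly to mixed actions, and let x ∈ ℝ^m. Suppose there exists δ₀ > 0 such that for every mixed action q of Player 2 there exist a mixed action p of Player 1 and δ ≥ δ₀ with u(p,q) = δx. Suppose also that for every λ ∈ ℝ^m the value of the zero-sum game with payoff ⟨λ, u(·,·)⟩ is nonnegative. Then for every λ ∈ ℝ^m, the value of the zero-sum game with payoff ⟨λ, u(·,·) - δ₀x⟩ is nonnegative. -/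
/-! For fixed `λ`, the translated payoff `⟪λ, u(p, q) - δ₀ x⟫` is a bilinear form in the mixed
actions `(p, q)`. If `⟪λ, x⟫ < 0`, a mixed action `p` guaranteeing more than `δ₀ ⟪λ, x⟫ < 0 ≤ v_λ`
in the original game guarantees `0` in the translated one. If `⟪λ, x⟫ ≥ 0`, condition B3 answers
every `q` by some `p` with translated payoff `(δ - δ₀) ⟪λ, x⟫ ≥ 0`, and the von Neumann minimax
theorem (a case of Sion's) turns these answers into a single `p` guaranteeing `0` against every
`q`. -/

open scoped RealInnerProductSpace

/-- The bilinear extension of `u` to mixed actions. -/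
noncomputable def mixedPayoff {A₁ A₂ : Type*} [Fintype A₁] [Fintype A₂] {m : ℕ}
    (u : A₁ → A₂ → EuclideanSpace ℝ (Fin m)) (p : A₁ → ℝ) (q : A₂ → ℝ) :
    EuclideanSpace ℝ (Fin m) :=
  ∑ a : A₁, ∑ b : A₂, (p a * q b) • u a b

open Set

section VonNeumann

variable {E F : Type*} [AddCommGroup E] [Module ℝ E] [TopologicalSpace E]
  [IsTopologicalAddGroup E] [ContinuousSMul ℝ E] [T2Space E] [FiniteDimensional ℝ E]
  [AddCommGroup F] [Module ℝ F] [TopologicalSpace F]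
  [IsTopologicalAddGroup F] [ContinuousSMul ℝ F] [T2Space F] [FiniteDimensional ℝ F]

theorem LinearMap.exists_forall_nonneg_of_forall_exists_nonneg (B : E →ₗ[ℝ] F →ₗ[ℝ] ℝ)
    {X : Set E} {Y : Set F} (hXc : Convex ℝ X) (hXk : IsCompact X)
    (hYne : Y.Nonempty) (hYc : Convex ℝ Y) (hYk : IsCompact Y)
    (h : ∀ q ∈ Y, ∃ p ∈ X, 0 ≤ B p q) : ∃ p ∈ X, ∀ q ∈ Y, 0 ≤ B p q := by
  obtain ⟨q₀, hq₀⟩ := hYne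
  obtain ⟨p₀, hp₀, -⟩ := h q₀ hq₀
  -- Sion's theorem minimises over its first variable, which here is `q`.
  obtain ⟨q, hq, p, hp, hsaddle⟩ := Sion.exists_isSaddlePointOn (f := fun q p => B p q)
    ⟨q₀, hq₀⟩ hYc hYk
    (fun p _ => (B p).continuous_of_finiteDimensional.lowerSemicontinuous.lowerSemicontinuousOn _)
    (fun p _ => ((B p).convexOn hYc).quasiconvexOn)
    hXc ⟨p₀, hp₀⟩ hXk
    (fun q _ =>
      (B.flip q).continuous_of_finiteDimensional.upperSemicontinuous.upperSemicontinuousOn _)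
    (fun q _ => ((B.flip q).concaveOn hXc).quasiconcaveOn)
  obtain ⟨p', hp', hp'q⟩ := h q hq
  exact ⟨p, hp, fun q' hq' => hp'q.trans (hsaddle q' hq' p' hp')⟩

end VonNeumann

section Value

variable {ι κ : Type*} [Fintype ι] [Fintype κ]

theorem exists_forall_lt_of_lt_iSup_iInf [Nonempty ι] {f : (ι → ℝ) → (κ → ℝ) → ℝ}
    (hf : ∀ p, Continuous (f p)) {k : ℝ}
    (h : k < ⨆ p : stdSimplex ℝ ι, ⨅ q : stdSimplex ℝ κ, f p.1 q.1) :
    ∃ p ∈ stdSimplex ℝ ι, ∀ q ∈ stdSimplex ℝ κ, k < f p q := by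
  obtain ⟨p, hp⟩ := exists_lt_of_lt_ciSup h
  refine ⟨p, p.2, fun q hq => hp.trans_le (ciInf_le ?_ (⟨q, hq⟩ : stdSimplex ℝ κ))⟩
  rw [← image_eq_range]
  exact (isCompact_stdSimplex ℝ κ).bddBelow_image (hf p).continuousOn

theorem le_iSup_iInf_of_forall_le [Nonempty κ] {f : (ι → ℝ) → (κ → ℝ) → ℝ}
    (hf : ∀ p, Continuous (f p)) (hf' : ∀ q, Continuous (f · q)) {k : ℝ} {p : ι → ℝ}
    (hp : p ∈ stdSimplex ℝ ι) (h : ∀ q ∈ stdSimplex ℝ κ, k ≤ f p q) :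
    k ≤ ⨆ p : stdSimplex ℝ ι, ⨅ q : stdSimplex ℝ κ, f p.1 q.1 := by
  obtain ⟨q₀⟩ : Nonempty (stdSimplex ℝ κ) := inferInstance
  have hbdd (p : stdSimplex ℝ ι) : BddBelow (range fun q : stdSimplex ℝ κ => f p.1 q.1) := by
    rw [← image_eq_range]
    exact (isCompact_stdSimplex ℝ κ).bddBelow_image (hf p).continuousOn
  obtain ⟨M, hM⟩ := (isCompact_stdSimplex ℝ ι).bddAbove_image (hf' q₀.1).continuousOn
  have hbdd' : BddAbove (range fun p : stdSimplex ℝ ι => ⨅ q : stdSimplex ℝ κ, f p.1 q.1) := by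
    refine ⟨M, forall_mem_range.2 fun p => ?_⟩
    exact (ciInf_le (hbdd p) q₀).trans (hM (mem_image_of_mem _ p.2))
  exact le_ciSup_of_le hbdd' ⟨p, hp⟩ (le_ciInf fun q => h q q.2)

end Value

section MixedPayoff

variable {A₁ A₂ : Type*} [Fintype A₁] [Fintype A₂] {m : ℕ}

noncomputable def mixedPayoffₗ (u : A₁ → A₂ → EuclideanSpace ℝ (Fin m)) :
    (A₁ → ℝ) →ₗ[ℝ] (A₂ → ℝ) →ₗ[ℝ] EuclideanSpace ℝ (Fin m) :=
  LinearMap.mk₂ ℝ (mixedPayoff u)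
    (fun _ _ _ => by
      simp only [mixedPayoff, Pi.add_apply, add_mul, add_smul, Finset.sum_add_distrib])
    (fun _ _ _ => by
      simp only [mixedPayoff, Pi.smul_apply, smul_eq_mul, mul_assoc, mul_smul, Finset.smul_sum])
    (fun _ _ _ => by
      simp only [mixedPayoff, Pi.add_apply, mul_add, add_smul, Finset.sum_add_distrib])
    (fun _ _ _ => by
      simp only [mixedPayoff, Pi.smul_apply, smul_eq_mul, mul_left_comm, mul_smul,
        Finset.smul_sum])

@[simp]
theorem mixedPayoffₗ_apply (u : A₁ → A₂ → EuclideanSpace ℝ (Fin m)) (p : A₁ → ℝ)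
    (q : A₂ → ℝ) :
    mixedPayoffₗ u p q = mixedPayoff u p q :=
  rfl

theorem mixedPayoff_sub_const (u : A₁ → A₂ → EuclideanSpace ℝ (Fin m))
    (y : EuclideanSpace ℝ (Fin m)) (p : A₁ → ℝ) (q : A₂ → ℝ) :
    mixedPayoff (fun a b => u a b - y) p q =
      mixedPayoff u p q - ((∑ a, p a) * ∑ b, q b) • y := by
  simp only [mixedPayoff, smul_sub, Finset.sum_sub_distrib, Finset.sum_mul_sum, Finset.sum_smul]

end MixedPayoff

/-- Part 3 of the proof of Theorem 2: if condition B3 holds with bound `δ₀` and the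
value `v_λ = sup_p inf_q ⟨λ, u(p,q)⟩` is nonnegative for every `λ`, then the value of
the translated game with payoff `⟨λ, u(·,·) - δ₀ x⟩` is nonnegative for every `λ`. -/
theorem stmt5 {A₁ A₂ : Type*} [Fintype A₁] [Fintype A₂] [Nonempty A₁] [Nonempty A₂]
    {m : ℕ} (u : A₁ → A₂ → EuclideanSpace ℝ (Fin m)) (x : EuclideanSpace ℝ (Fin m))
    (δ₀ : ℝ) (hδ₀ : 0 < δ₀)
    (hB3 : ∀ q ∈ stdSimplex ℝ A₂, ∃ p ∈ stdSimplex ℝ A₁, ∃ δ : ℝ, δ₀ ≤ δ ∧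
      mixedPayoff u p q = δ • x)
    (hB2 : ∀ lam : EuclideanSpace ℝ (Fin m),
      0 ≤ ⨆ p : stdSimplex ℝ A₁, ⨅ q : stdSimplex ℝ A₂,
        ⟪lam, mixedPayoff u p.1 q.1⟫) :
    ∀ lam : EuclideanSpace ℝ (Fin m),
      0 ≤ ⨆ p : stdSimplex ℝ A₁, ⨅ q : stdSimplex ℝ A₂,
        ⟪lam, mixedPayoff u p.1 q.1 - δ₀ • x⟫ := by
  intro lam
  set B := (mixedPayoffₗ (fun a b => u a b - δ₀ • x)).compr₂ (innerₗ _ lam)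
  have hB : ∀ p ∈ stdSimplex ℝ A₁, ∀ q ∈ stdSimplex ℝ A₂,
      B p q = ⟪lam, mixedPayoff u p q - δ₀ • x⟫ := fun p hp q hq => by
    simp [B, mixedPayoff_sub_const, hp.2, hq.2]
  suffices ∃ p ∈ stdSimplex ℝ A₁, ∀ q ∈ stdSimplex ℝ A₂, 0 ≤ B p q by
    obtain ⟨p, hp, h⟩ := this
    calc 0 ≤ ⨆ p : stdSimplex ℝ A₁, ⨅ q : stdSimplex ℝ A₂, B p q :=
          le_iSup_iInf_of_forall_le (fun p => (B p).continuous_of_finiteDimensional)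
            (fun q => (B.flip q).continuous_of_finiteDimensional) hp h
      _ = _ := iSup_congr fun p => iInf_congr fun q => hB p p.2 q q.2
  rcases lt_or_ge ⟪lam, x⟫ 0 with hx | hx
  · set B₀ := (mixedPayoffₗ u).compr₂ (innerₗ _ lam)
    obtain ⟨p, hp, h⟩ := exists_forall_lt_of_lt_iSup_iInf
      (fun p => (B₀ p).continuous_of_finiteDimensional)
      ((mul_neg_of_pos_of_neg hδ₀ hx).trans_le (hB2 lam))
    refine ⟨p, hp, fun q hq => ?_⟩
    rw [hB p hp q hq, inner_sub_right, real_inner_smul_right]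
    exact sub_nonneg.2 (h q hq).le
  · refine B.exists_forall_nonneg_of_forall_exists_nonneg (convex_stdSimplex ℝ A₁)
      (isCompact_stdSimplex ℝ A₁) (nonempty_coe_sort.1 inferInstance)
      (convex_stdSimplex ℝ A₂) (isCompact_stdSimplex ℝ A₂) fun q hq => ?_
    obtain ⟨p, hp, δ, hδ, hpq⟩ := hB3 q hq
    refine ⟨p, hp, ?_⟩
    rw [hB p hp q hq, hpq, ← sub_smul, real_inner_smul_right]
    exact mul_nonneg (sub_nonneg.2 hδ) hx
end

section
/- Let u : Δ(A₁) × Δ(A₂) → ℝ^m be a bilinear payoff function on products of simplices over finite action sets, and suppose that for every nonzero λ ∈ ℝ^m the value v_λ of the zero-sum game with payoff ⟨λ, u⟩ is strictly positive. Then for every x ∈ ℝ^m there exists δ > 0 such that for every λ ∈ ℝ^m, the value of the zero-sum game with payoff ⟨λ, u(·,·) - δx⟩ is nonnegative. -/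
/-!
The value `v_λ` is positively homogeneous in `λ` and, as a sup-inf of uniformly Lipschitz
functions of `λ`, continuous; minimising it over the compact unit sphere, condition C2 gives
`c > 0` with `v_λ ≥ c ‖λ‖`. Subtracting `δ x` from the payoff shifts the value of the game
`⟨λ, ·⟩` by the constant `δ ⟨λ, x⟩ ≤ δ ‖x‖ ‖λ‖`, so any `δ > 0` with `δ ‖x‖ ≤ c` works.
-/

open scoped RealInnerProductSpace

section Maxmin

variable {ι κ : Type*}

/-- Over `ℝ`, `⨆` and `⨅` of unbounded families are `0`; hence the bounds `|f i j| ≤ B`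
in the lemmas below. -/
noncomputable def maxmin (f : ι → κ → ℝ) : ℝ := ⨆ i, ⨅ j, f i j

variable {f g : ι → κ → ℝ} {B C : ℝ}

lemma maxmin_const_mul {c : ℝ} (hc : 0 ≤ c) :
    maxmin (fun i j => c * f i j) = c * maxmin f := by
  simp only [maxmin, Real.mul_iSup_of_nonneg hc, Real.mul_iInf_of_nonneg hc]

lemma bddBelow_range_of_abs_le (hf : ∀ i j, |f i j| ≤ B) (i : ι) :
    BddBelow (Set.range (f i)) :=
  ⟨-B, by rintro _ ⟨j, rfl⟩; exact neg_le_of_abs_le (hf i j)⟩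

variable [Nonempty κ]

lemma bddAbove_range_iInf_of_abs_le (hf : ∀ i j, |f i j| ≤ B) :
    BddAbove (Set.range fun i => ⨅ j, f i j) :=
  ⟨B, by
    rintro _ ⟨i, rfl⟩
    exact (ciInf_le (bddBelow_range_of_abs_le hf i) (Classical.arbitrary κ)).trans
      (le_of_abs_le (hf _ _))⟩

variable [Nonempty ι]

lemma maxmin_le_add (hf : ∀ i j, |f i j| ≤ B) (hg : ∀ i j, |g i j| ≤ C) {ε : ℝ}
    (hfg : ∀ i j, f i j ≤ g i j + ε) : maxmin f ≤ maxmin g + ε := by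
  refine ciSup_le fun i => ?_
  have hrow : ⨅ j, f i j ≤ (⨅ j, g i j) + ε := by
    rw [← sub_le_iff_le_add]
    exact le_ciInf fun j => sub_le_iff_le_add.mpr
      ((ciInf_le (bddBelow_range_of_abs_le hf i) j).trans (hfg i j))
  exact hrow.trans (add_le_add_left (le_ciSup (bddAbove_range_iInf_of_abs_le hg) i) ε)

lemma maxmin_sub_const (hf : ∀ i j, |f i j| ≤ B) (a : ℝ) :
    maxmin (fun i j => f i j - a) = maxmin f - a := by
  simp only [maxmin, ciSup_sub (bddAbove_range_iInf_of_abs_le hf),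
    ciInf_sub (bddBelow_range_of_abs_le hf _)]

end Maxmin

lemma exists_pos_mul_norm_le_of_homogeneous {E : Type*} [NormedAddCommGroup E]
    [NormedSpace ℝ E] [ProperSpace E] {F : E → ℝ} (hF : Continuous F)
    (hhom : ∀ c : ℝ, 0 ≤ c → ∀ x, F (c • x) = c * F x) (hpos : ∀ x, x ≠ 0 → 0 < F x) :
    ∃ c > 0, ∀ x, c * ‖x‖ ≤ F x := by
  have hF0 : F 0 = 0 := by simpa using hhom 0 le_rfl 0
  rcases subsingleton_or_nontrivial E with hE | hE
  · exact ⟨1, one_pos, fun x => by simp [Subsingleton.elim x 0, hF0]⟩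
  obtain ⟨x₀, hx₀, hmin⟩ := (isCompact_sphere (0 : E) 1).exists_isMinOn
    (NormedSpace.sphere_nonempty.mpr zero_le_one) hF.continuousOn
  have hx₀ne : x₀ ≠ 0 := ne_zero_of_mem_unit_sphere ⟨x₀, hx₀⟩
  refine ⟨F x₀, hpos x₀ hx₀ne, fun x => ?_⟩
  rcases eq_or_ne x 0 with rfl | hx
  · simp [hF0]
  have hnx : 0 < ‖x‖ := norm_pos_iff.mpr hx
  have hunit : ‖x‖⁻¹ • x ∈ Metric.sphere (0 : E) 1 := by
    rw [mem_sphere_zero_iff_norm, norm_smul, norm_inv, norm_norm, inv_mul_cancel₀ hnx.ne']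
  calc F x₀ * ‖x‖ ≤ F (‖x‖⁻¹ • x) * ‖x‖ := mul_le_mul_of_nonneg_right (hmin hunit) hnx.le
    _ = F x := by rw [mul_comm, ← hhom _ hnx.le, smul_inv_smul₀ hnx.ne']

section ScalarizedGame

variable {A₁ A₂ : Type*} [Fintype A₁] [Fintype A₂] {m : ℕ}
  (u : A₁ → A₂ → EuclideanSpace ℝ (Fin m))

lemma norm_mixedPayoff_le {M : ℝ} (hu : ∀ a b, ‖u a b‖ ≤ M) {p : A₁ → ℝ} {q : A₂ → ℝ}
    (hp : p ∈ stdSimplex ℝ A₁) (hq : q ∈ stdSimplex ℝ A₂) : ‖mixedPayoff u p q‖ ≤ M :=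
  calc ‖mixedPayoff u p q‖ ≤ ∑ a, ∑ b, ‖(p a * q b) • u a b‖ :=
        (norm_sum_le _ _).trans (Finset.sum_le_sum fun a _ => norm_sum_le _ _)
    _ ≤ ∑ a, ∑ b, (p a * q b) * M := by
        gcongr with a _ b _
        rw [norm_smul, Real.norm_of_nonneg (mul_nonneg (hp.1 a) (hq.1 b))]
        exact mul_le_mul_of_nonneg_left (hu a b) (mul_nonneg (hp.1 a) (hq.1 b))
    _ = M := by
        simp_rw [mul_assoc, ← Finset.mul_sum, ← Finset.sum_mul, hq.2, hp.2, one_mul]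

lemma exists_abs_inner_mixedPayoff_le : ∃ M, ∀ (lam : EuclideanSpace ℝ (Fin m))
    (p : stdSimplex ℝ A₁) (q : stdSimplex ℝ A₂), |⟪lam, mixedPayoff u p.1 q.1⟫| ≤ ‖lam‖ * M := by
  obtain ⟨M, hM⟩ := (Set.finite_range fun ab : A₁ × A₂ => ‖u ab.1 ab.2‖).bddAbove
  refine ⟨M, fun lam p q => (abs_real_inner_le_norm _ _).trans ?_⟩
  exact mul_le_mul_of_nonneg_left
    (norm_mixedPayoff_le u (fun a b => hM ⟨(a, b), rfl⟩) p.2 q.2) (norm_nonneg _)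

/-- The value `v_λ` of the zero-sum game with payoff `⟨λ, u⟩`. -/
noncomputable def scalarizedValue (lam : EuclideanSpace ℝ (Fin m)) : ℝ :=
  maxmin fun (p : stdSimplex ℝ A₁) (q : stdSimplex ℝ A₂) => ⟪lam, mixedPayoff u p.1 q.1⟫

lemma scalarizedValue_smul {c : ℝ} (hc : 0 ≤ c) (lam : EuclideanSpace ℝ (Fin m)) :
    scalarizedValue u (c • lam) = c * scalarizedValue u lam := by
  simp only [scalarizedValue, real_inner_smul_left, maxmin_const_mul hc]

variable [Nonempty A₁] [Nonempty A₂]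

lemma continuous_scalarizedValue : Continuous (scalarizedValue u) := by
  obtain ⟨M, hM⟩ := exists_abs_inner_mixedPayoff_le u
  refine (LipschitzWith.of_le_add_mul' M fun lam mu => ?_).continuous
  refine maxmin_le_add (hM lam) (hM mu) fun p q => ?_
  have := le_of_abs_le (hM (lam - mu) p q)
  rw [inner_sub_left, ← dist_eq_norm] at this
  linarith

lemma maxmin_inner_mixedPayoff_sub (lam y : EuclideanSpace ℝ (Fin m)) :
    maxmin (fun (p : stdSimplex ℝ A₁) (q : stdSimplex ℝ A₂) =>
      ⟪lam, mixedPayoff u p.1 q.1 - y⟫) = scalarizedValue u lam - ⟪lam, y⟫ := by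
  obtain ⟨M, hM⟩ := exists_abs_inner_mixedPayoff_le u
  simp only [inner_sub_right]
  exact maxmin_sub_const (hM lam) _

end ScalarizedGame

/-- Heart of C2 ⇒ C1 in Theorem 3: if the value `v_λ = sup_p inf_q ⟨λ, u(p,q)⟩`
is strictly positive for every nonzero `λ`, then for every `x` there is `δ > 0`
such that the value of the game with payoff `⟨λ, u(·,·) - δ x⟩` is nonnegative
for every `λ`. -/
theorem stmt6 {A₁ A₂ : Type*} [Fintype A₁] [Fintype A₂] [Nonempty A₁] [Nonempty A₂]
    {m : ℕ} (u : A₁ → A₂ → EuclideanSpace ℝ (Fin m))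
    (hC2 : ∀ lam : EuclideanSpace ℝ (Fin m), lam ≠ 0 →
      0 < ⨆ p : stdSimplex ℝ A₁, ⨅ q : stdSimplex ℝ A₂,
        ⟪lam, mixedPayoff u p.1 q.1⟫) :
    ∀ x : EuclideanSpace ℝ (Fin m), ∃ δ : ℝ, 0 < δ ∧
      ∀ lam : EuclideanSpace ℝ (Fin m),
        0 ≤ ⨆ p : stdSimplex ℝ A₁, ⨅ q : stdSimplex ℝ A₂,
          ⟪lam, mixedPayoff u p.1 q.1 - δ • x⟫ := by
  intro x
  obtain ⟨c, hc, hcv⟩ := exists_pos_mul_norm_le_of_homogeneous (continuous_scalarizedValue u)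
    (fun _ => scalarizedValue_smul u) hC2
  have hδx : c / (‖x‖ + 1) * ‖x‖ ≤ c := by
    rw [div_mul_eq_mul_div, div_le_iff₀ (by positivity)]
    nlinarith [norm_nonneg x]
  refine ⟨c / (‖x‖ + 1), by positivity, fun lam => ?_⟩
  change 0 ≤ maxmin _
  rw [maxmin_inner_mixedPayoff_sub, sub_nonneg, real_inner_smul_right]
  calc c / (‖x‖ + 1) * ⟪lam, x⟫ ≤ c / (‖x‖ + 1) * (‖lam‖ * ‖x‖) := by
        gcongr; exact real_inner_le_norm lam x
    _ ≤ c * ‖lam‖ := by nlinarith [norm_nonneg lam]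
    _ ≤ scalarizedValue u lam := hcv lam
end

section
/- Consider the discrete-time one-dimensional game where Player 1 chooses row U or B, Player 2 chooses column L or R, with payoffs u(U,L) = -3, u(U,R) = -1, u(B,L) = 1, u(B,R) = 3. Let (p^ℓ)_ℓ be any sequence of mixed actions of Player 1, and let Player 2 at stage ℓ play L if p^ℓ(U) ≥ 1/2 and R otherwise. Then the expected stage payoff at stage ℓ has absolute value at least 1/2 and in particular, if the cumulative expected payoff up to stage ℓ lies in [-1/2, 1/2], then the cumulative expected payoff up to stage ℓ+1 lies outside the open interval (-1/2, 1/2). -/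
/-! Against the threshold response the stage payoff is `1 - 4p ≤ -1` or `3 - 4p > 1`, so a single
stage moves the cumulative payoff by at least `1`, the length of `[-1/2, 1/2]`. -/

open Finset Set

lemma one_le_abs_stagePayoff (q : ℝ) :
    1 ≤ |if (1/2 : ℝ) ≤ q then (-3) * q + 1 * (1 - q) else (-1) * q + 3 * (1 - q)| := by
  split_ifs with hq
  · rw [abs_of_nonpos (by linarith)]; linarith
  · rw [abs_of_nonneg (by linarith)]; linarith

lemma add_notMem_Ioo_of_mem_Icc {a s x : ℝ} (hs : s ∈ Icc (-a) a) (hx : 2 * a ≤ |x|) :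
    s + x ∉ Ioo (-a) a := by
  rintro ⟨hlow, hhigh⟩
  rcases abs_cases x with ⟨habs, -⟩ | ⟨habs, -⟩ <;> linarith [hs.1, hs.2]

theorem stmt9_general (p : ℕ → ℝ)
    (g : ℕ → ℝ)
    (hg : ∀ ℓ, g ℓ = if (1/2 : ℝ) ≤ p ℓ
      then (-3) * p ℓ + 1 * (1 - p ℓ)
      else (-1) * p ℓ + 3 * (1 - p ℓ)) :
    ∀ ℓ : ℕ,
      (1/2 : ℝ) ≤ |g ℓ| ∧
      ((∑ j ∈ Finset.range ℓ, g j) ∈ Set.Icc (-(1/2) : ℝ) (1/2) →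
        (∑ j ∈ Finset.range (ℓ + 1), g j) ∉ Set.Ioo (-(1/2) : ℝ) (1/2)) := by
  intro ℓ
  have hgℓ : 1 ≤ |g ℓ| := hg ℓ ▸ one_le_abs_stagePayoff (p ℓ)
  refine ⟨by linarith, fun hsum => ?_⟩
  rw [sum_range_succ]
  exact add_notMem_Ioo_of_mem_Icc hsum (by linarith)

/-- Example 1: in the discrete-time game with payoffs `u(U,L) = -3`, `u(U,R) = -1`,
`u(B,L) = 1`, `u(B,R) = 3`, if Player 2 plays `L` at stage `ℓ` when `pℓ(U) ≥ 1/2`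
and `R` otherwise, then the expected stage payoff has absolute value at least `1/2`,
and whenever the cumulative expected payoff up to stage `ℓ` lies in `[-1/2, 1/2]`,
the cumulative expected payoff up to stage `ℓ+1` lies outside `(-1/2, 1/2)`. -/
theorem stmt9 (p : ℕ → ℝ) (hp : ∀ ℓ, p ℓ ∈ Set.Icc (0 : ℝ) 1)
    (g : ℕ → ℝ)
    (hg : ∀ ℓ, g ℓ = if (1/2 : ℝ) ≤ p ℓ
      then (-3) * p ℓ + 1 * (1 - p ℓ)
      else (-1) * p ℓ + 3 * (1 - p ℓ)) :
    ∀ ℓ : ℕ,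
      (1/2 : ℝ) ≤ |g ℓ| ∧
      ((∑ j ∈ Finset.range ℓ, g j) ∈ Set.Icc (-(1/2) : ℝ) (1/2) →
        (∑ j ∈ Finset.range (ℓ + 1), g j) ∉ Set.Ioo (-(1/2) : ℝ) (1/2)) :=
  stmt9_general p g hg
end

section
/- Let u : Δ(A₁) × Δ(A₂) → ℝ^m be bilinear over finite action sets, and x ∈ ℝ^m. Suppose there is δ₀ > 0 such that for every q ∈ Δ(A₂) there exist p ∈ Δ(A₁) and δ_q ≥ δ₀ with u(p, q) = δ_q · x. Then for every λ ∈ ℝ^m with ⟨λ, x⟩ ≥ 0, we have max_p min_q ⟨λ, u(p, q)⟩ ≥ δ₀ · ⟨λ, x⟩. -/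
open scoped RealInnerProductSpace

/-!
Put `M a b = ⟪λ, u a b⟫`, so that `⟪λ, u(p, q)⟫ = p ᵥ* M ⬝ᵥ q`. Since `⟪λ, x⟫ ≥ 0`, the hypothesis
says that against every mixed `q` the row player can secure `c = δ₀ ⟪λ, x⟫`. The half of von
Neumann's minimax theorem that is needed, namely that a single `p` then secures `c` against every
column, follows by separating the compact convex set `{p ᵥ* M | p ∈ Δ(A₁)}` from the orthant
`{y | c ≤ y}`: the separating functional has nonnegative weights, so after normalisation it is a
mixed strategy `q` against which no `p` reaches `c`.
-/

open Matrix Set Function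

theorem LinearMap.apply_ite_nonneg_of_lt_on_Ici {κ : Type*} [DecidableEq κ] (φ : (κ → ℝ) →ₗ[ℝ] ℝ)
    {c t : ℝ} (hφ : ∀ y, Function.const κ c ≤ y → t < φ y) (j : κ) :
    0 ≤ φ (fun k => if j = k then 1 else 0) := by
  set e : κ → ℝ := fun k => if j = k then 1 else 0
  by_contra! hneg
  have hc : t < φ (Function.const κ c) := hφ _ le_rfl
  -- pushing the constant vector far enough along `e` drives `φ` down to `t`
  set r := (φ (Function.const κ c) - t) / -φ e
  have hr : 0 ≤ r := div_nonneg (by linarith) (by linarith)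
  have he : 0 ≤ e := fun k => by simp only [e]; split_ifs <;> norm_num
  have hφy : φ (Function.const κ c + r • e) = t := by
    rw [map_add, map_smul, smul_eq_mul]
    simp only [r]
    field_simp [hneg.ne]
    ring
  exact (hφ _ (le_add_of_nonneg_right (smul_nonneg hr he))).ne' hφy

theorem exists_mem_stdSimplex_forall_dotProduct_lt {κ : Type*} [Fintype κ] {K : Set (κ → ℝ)}
    (hKconv : Convex ℝ K) (hKcomp : IsCompact K) (hKne : K.Nonempty) {c : ℝ}
    (hdisj : Disjoint K (Ici (const κ c))) :
    ∃ q ∈ stdSimplex ℝ κ, ∀ y ∈ K, y ⬝ᵥ q < c := by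
  classical
  obtain ⟨φ, s, t, hφK, hst, hφC⟩ :=
    geometric_hahn_banach_compact_closed hKconv hKcomp (convex_Ici _) isClosed_Ici hdisj
  set w : κ → ℝ := fun j => φ (fun k => if j = k then 1 else 0)
  have hφw : ∀ y, φ y = y ⬝ᵥ w := fun y => (φ : (κ → ℝ) →ₗ[ℝ] ℝ).pi_apply_eq_sum_univ y
  have hw : ∀ j, 0 ≤ w j := (φ : (κ → ℝ) →ₗ[ℝ] ℝ).apply_ite_nonneg_of_lt_on_Ici
    fun y hy => hst.trans (hφC y hy)
  have hφlt : ∀ y ∈ K, φ y < c * ∑ j, w j := fun y hy => by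
    have := hφC (const κ c) self_mem_Ici
    rw [hφw] at this
    simp only [dotProduct, const_apply, Finset.mul_sum] at this ⊢
    linarith [hφK y hy]
  have hS : 0 < ∑ j, w j := by
    refine (Finset.sum_nonneg fun j _ => hw j).lt_of_ne fun hS => ?_
    have hw0 : w = 0 := funext fun j =>
      (Finset.sum_eq_zero_iff_of_nonneg fun j _ => hw j).mp hS.symm j (Finset.mem_univ j)
    obtain ⟨y₀, hy₀⟩ := hKne
    simpa [hφw, hw0] using hφlt y₀ hy₀
  refine ⟨(∑ j, w j)⁻¹ • w, ⟨fun j => mul_nonneg (inv_nonneg.2 hS.le) (hw j), ?_⟩,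
    fun y hy => ?_⟩
  · simp [← Finset.mul_sum, hS.ne']
  · rw [dotProduct_smul, smul_eq_mul, ← hφw, inv_mul_lt_iff₀ hS, mul_comm]
    exact hφlt y hy

theorem Matrix.exists_mem_stdSimplex_const_le_vecMul {ι κ : Type*} [Fintype ι] [Fintype κ]
    [Nonempty κ] (M : Matrix ι κ ℝ) (c : ℝ)
    (h : ∀ q ∈ stdSimplex ℝ κ, ∃ p ∈ stdSimplex ℝ ι, c ≤ p ᵥ* M ⬝ᵥ q) :
    ∃ p ∈ stdSimplex ℝ ι, const κ c ≤ p ᵥ* M := by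
  classical
  by_contra! hcon
  obtain ⟨p₀, hp₀, -⟩ := h _ (ite_eq_mem_stdSimplex ℝ (Classical.arbitrary κ))
  obtain ⟨q, hq, hlt⟩ := exists_mem_stdSimplex_forall_dotProduct_lt
    ((convex_stdSimplex ℝ ι).linear_image M.vecMulLinear)
    ((isCompact_stdSimplex ℝ ι).image M.vecMulLinear.continuous_of_finiteDimensional)
    ⟨_, p₀, hp₀, rfl⟩ (c := c) (disjoint_left.2 fun _ ⟨p, hp, hpM⟩ => hpM ▸ hcon p hp)
  obtain ⟨p, hp, hpq⟩ := h q hq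
  exact (hlt _ ⟨p, hp, rfl⟩).not_ge hpq

theorem le_dotProduct_of_mem_stdSimplex {κ : Type*} [Fintype κ] {v q : κ → ℝ} {c : ℝ}
    (hv : const κ c ≤ v) (hq : q ∈ stdSimplex ℝ κ) : c ≤ v ⬝ᵥ q :=
  calc c = ∑ j, c * q j := by rw [← Finset.mul_sum, hq.2, mul_one]
    _ ≤ v ⬝ᵥ q := Finset.sum_le_sum fun j _ => mul_le_mul_of_nonneg_right (hv j) (hq.1 j)

theorem le_ciSup_ciInf_of_forall_le {α β : Type*} [Nonempty β] {f : α → β → ℝ}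
    (hf : Bornology.IsBounded (range (uncurry f))) {c : ℝ} (a : α) (ha : ∀ b, c ≤ f a b) :
    c ≤ ⨆ a, ⨅ b, f a b := by
  obtain ⟨L, hL⟩ := hf.bddBelow
  obtain ⟨U, hU⟩ := hf.bddAbove
  have hbdd : ∀ a, BddBelow (range (f a)) := fun a =>
    ⟨L, forall_mem_range.2 fun b => hL ⟨(a, b), rfl⟩⟩
  refine le_ciSup_of_le ⟨U, forall_mem_range.2 fun a => ?_⟩ a (le_ciInf ha)
  exact ciInf_le_of_le (hbdd a) (Classical.arbitrary β) (hU ⟨(a, _), rfl⟩)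

theorem Matrix.isBounded_range_vecMul_dotProduct {ι κ : Type*} [Fintype ι] [Fintype κ]
    (M : Matrix ι κ ℝ) :
    Bornology.IsBounded
      (range (uncurry fun (p : stdSimplex ℝ ι) (q : stdSimplex ℝ κ) => p.1 ᵥ* M ⬝ᵥ q.1)) := by
  have := isCompact_iff_compactSpace.1 (isCompact_stdSimplex ℝ ι)
  have := isCompact_iff_compactSpace.1 (isCompact_stdSimplex ℝ κ)
  exact (isCompact_range (by fun_prop)).isBounded

theorem inner_mixedPayoff {A₁ A₂ : Type*} [Fintype A₁] [Fintype A₂] {m : ℕ}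
    (lam : EuclideanSpace ℝ (Fin m)) (u : A₁ → A₂ → EuclideanSpace ℝ (Fin m))
    (p : A₁ → ℝ) (q : A₂ → ℝ) :
    ⟪lam, mixedPayoff u p q⟫ = p ᵥ* Matrix.of (fun a b => ⟪lam, u a b⟫) ⬝ᵥ q := by
  simp only [mixedPayoff, inner_sum, real_inner_smul_right, vecMul, dotProduct, of_apply,
    Finset.sum_mul]
  rw [Finset.sum_comm]
  exact Finset.sum_congr rfl fun b _ => Finset.sum_congr rfl fun a _ => by ring

theorem stmt15_general {A₁ A₂ : Type*} [Fintype A₁] [Fintype A₂] [Nonempty A₂]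
    {m : ℕ} (u : A₁ → A₂ → EuclideanSpace ℝ (Fin m)) (x : EuclideanSpace ℝ (Fin m))
    (δ₀ : ℝ)
    (hB3 : ∀ q ∈ stdSimplex ℝ A₂, ∃ p ∈ stdSimplex ℝ A₁, ∃ δq : ℝ, δ₀ ≤ δq ∧
      mixedPayoff u p q = δq • x) :
    ∀ lam : EuclideanSpace ℝ (Fin m), 0 ≤ ⟪lam, x⟫ →
      δ₀ * ⟪lam, x⟫ ≤ ⨆ p : stdSimplex ℝ A₁, ⨅ q : stdSimplex ℝ A₂,
        ⟪lam, mixedPayoff u p.1 q.1⟫ := by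
  intro lam hlam
  set M : Matrix A₁ A₂ ℝ := Matrix.of fun a b => ⟪lam, u a b⟫
  simp only [inner_mixedPayoff]
  obtain ⟨p, hp, hpM⟩ := M.exists_mem_stdSimplex_const_le_vecMul (δ₀ * ⟪lam, x⟫) fun q hq => by
    obtain ⟨p, hp, δq, hδq, hpq⟩ := hB3 q hq
    refine ⟨p, hp, ?_⟩
    rw [← inner_mixedPayoff, hpq, real_inner_smul_right]
    exact mul_le_mul_of_nonneg_right hδq hlam
  exact le_ciSup_ciInf_of_forall_le M.isBounded_range_vecMul_dotProduct ⟨p, hp⟩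
    fun q => le_dotProduct_of_mem_stdSimplex hpM q.2

/-- Second case in Part 3 of the proof of Theorem 2: if condition B3 holds with bound
`δ₀` then for every `λ` with `⟨λ, x⟩ ≥ 0`, the value `max_p min_q ⟨λ, u(p,q)⟩` is at
least `δ₀ ⟨λ, x⟩`. -/
theorem stmt15 {A₁ A₂ : Type*} [Fintype A₁] [Fintype A₂] [Nonempty A₁] [Nonempty A₂]
    {m : ℕ} (u : A₁ → A₂ → EuclideanSpace ℝ (Fin m)) (x : EuclideanSpace ℝ (Fin m))
    (δ₀ : ℝ) (hδ₀ : 0 < δ₀)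
    (hB3 : ∀ q ∈ stdSimplex ℝ A₂, ∃ p ∈ stdSimplex ℝ A₁, ∃ δq : ℝ, δ₀ ≤ δq ∧
      mixedPayoff u p q = δq • x) :
    ∀ lam : EuclideanSpace ℝ (Fin m), 0 ≤ ⟪lam, x⟫ →
      δ₀ * ⟪lam, x⟫ ≤ ⨆ p : stdSimplex ℝ A₁, ⨅ q : stdSimplex ℝ A₂,
        ⟪lam, mixedPayoff u p.1 q.1⟫ :=
  stmt15_general u x δ₀ hB3
end
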